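/- arXiv:2309.02372 — 3 statements merged into one kernel-verified Lean document; each statement's English description precedes it below -/
import Mathlib

section
/- Let A = Z/4Z and let X be the complex with X_i = Z/4Z in every degree and all differentials given by multiplication by 2. Then X is acyclic, but the tensor product complex X ⊗_A X is not acyclic. -/
/-!
Multiplication by `2` on `ℤ/4` has kernel and image both equal to `2ℤ/4`, so `X` is acyclic.
Since `2 • d_X = 0`, also `2 • d_{X ⊗ X} = 0`, so `2 • (1 ⊗ 1)` in bidegree `(0, 0)` is a cocycle.
The functional on `(X ⊗ X)ⁿ` summing the products `x * y` over all summands kills coboundaries: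
`d (x ⊗ y) = 2x ⊗ y ± x ⊗ 2y` is sent to `2xy (1 ± 1) = 0` in `ℤ/4`. It takes the value `2`
on the cocycle above, which is therefore not a coboundary.
-/

open CategoryTheory MonoidalCategory

instance curriedTensorAdditive : (curriedTensor (ModuleCat.{0} (ZMod 4))).Additive where
  map_add {X Y f g} := by
    ext Z : 2
    simp [MonoidalPreadditive.add_whiskerRight]

/-- The cochain complex `⋯ → ℤ/4 → ℤ/4 → ℤ/4 → ⋯` (indexed by `ℤ`) over the ring
`ℤ/4`, in which every differential is multiplication by `2`. -/
noncomputable def mulTwoComplex :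
    HomologicalComplex (ModuleCat.{0} (ZMod 4)) (ComplexShape.up ℤ) where
  X _ := ModuleCat.of (ZMod 4) (ZMod 4)
  d i j := if i + 1 = j then ModuleCat.ofHom (LinearMap.lsmul (ZMod 4) (ZMod 4) 2) else 0
  shape i j h := by
    simp only [ComplexShape.up_Rel] at h
    try dsimp only
    rw [if_neg h]
  d_comp_d' i j k _ _ := by
    try dsimp only
    split_ifs
    · apply ModuleCat.hom_ext
      apply LinearMap.ext
      intro x
      show (2 : ZMod 4) • ((2 : ZMod 4) • x) = 0
      rw [smul_smul, show (2 : ZMod 4) * 2 = 0 by decide, zero_smul]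
    all_goals simp

namespace HomologicalComplex

section Tensor

variable {C : Type*} [Category C] [MonoidalCategory C] [Preadditive C]
  [(curriedTensor C).Additive] [∀ X : C, ((curriedTensor C).obj X).Additive]
  (K L : CochainComplex C ℤ) [K.HasTensor L]

lemma ιTensorObj_d (p q n : ℤ) (h : p + q = n) :
    K.ιTensorObj L p q n h ≫ (K.tensorObj L).d n (n + 1) =
      (K.d p (p + 1) ▷ L.X q) ≫ K.ιTensorObj L (p + 1) q (n + 1) (by omega) +
        (p.negOnePow : ℤ) • (K.X p ◁ L.d q (q + 1)) ≫
          K.ιTensorObj L p (q + 1) (n + 1) (by omega) := by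
  rw [mapBifunctor.d_eq, Preadditive.comp_add, mapBifunctor.ι_D₁, mapBifunctor.ι_D₂,
    mapBifunctor.d₁_eq _ _ _ _ (i₁' := p + 1) rfl q (n + 1) (show p + 1 + q = n + 1 by omega),
    mapBifunctor.d₂_eq _ _ _ _ p (i₂' := q + 1) rfl (n + 1) (show p + (q + 1) = n + 1 by omega)]
  simp [Units.smul_def]

end Tensor

section LinearTensor

variable {R C : Type*} [Semiring R] [Category C] [MonoidalCategory C] [Preadditive C]
  [Linear R C] [MonoidalPreadditive C] [MonoidalLinear R C]
  (K L : CochainComplex C ℤ) [K.HasTensor L]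

lemma smul_tensorObj_d_eq_zero (r : R) (hK : ∀ i j, r • K.d i j = 0)
    (hL : ∀ i j, r • L.d i j = 0) (i j : ℤ) : r • (K.tensorObj L).d i j = 0 := by
  by_cases hij : i + 1 = j
  · subst hij
    refine mapBifunctor.hom_ext fun p q h => ?_
    rw [Linear.comp_smul, ιTensorObj_d K L p q i h, smul_add, ← Linear.smul_comp,
      ← MonoidalLinear.smul_whiskerRight, hK, smul_comm, ← Linear.smul_comp,
      ← MonoidalLinear.whiskerLeft_smul, hL]
    simp
  · rw [(K.tensorObj L).shape i j hij, smul_zero]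

end LinearTensor

lemma not_exactAt_of_d_comp_eq_zero {R : Type*} [Ring R] {ι : Type*} {c : ComplexShape ι}
    (K : HomologicalComplex (ModuleCat R) c) (i : ι) {M : ModuleCat R} (φ : K.X i ⟶ M)
    (hφ : K.d (c.prev i) i ≫ φ = 0) (z : K.X i) (hz : K.d i (c.next i) z = 0)
    (hφz : φ z ≠ 0) : ¬ K.ExactAt i := by
  rw [exactAt_iff, ShortComplex.moduleCat_exact_iff]
  intro hexact
  obtain ⟨y, rfl⟩ := hexact z hz
  exact hφz congr($hφ y)

end HomologicalComplex

lemma mulTwoComplex_d_eq {i j : ℤ} (h : i + 1 = j) :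
    mulTwoComplex.d i j = ModuleCat.ofHom (LinearMap.lsmul (ZMod 4) (ZMod 4) 2) := by
  simp [mulTwoComplex, h]

lemma mulTwoComplex_exactAt (i : ℤ) : mulTwoComplex.ExactAt i := by
  rw [HomologicalComplex.exactAt_iff' _ (i - 1) i (i + 1) (by simp) (by simp),
    ShortComplex.moduleCat_exact_iff]
  have ker_le_range : ∀ x : ZMod 4, 2 * x = 0 → ∃ y : ZMod 4, 2 * y = x := by decide
  intro (x : ZMod 4) (hx : mulTwoComplex.d i (i + 1) x = 0)
  rw [mulTwoComplex_d_eq rfl] at hx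
  show ∃ y : ZMod 4, mulTwoComplex.d (i - 1) i y = x
  rw [mulTwoComplex_d_eq (sub_add_cancel i 1)]
  exact ker_le_range x hx

lemma two_smul_mulTwoComplex_d (i j : ℤ) : (2 : ZMod 4) • mulTwoComplex.d i j = 0 := by
  by_cases hij : i + 1 = j
  · rw [mulTwoComplex_d_eq hij]
    ext
    rfl
  · rw [mulTwoComplex.shape i j hij, smul_zero]

lemma two_smul_mulTwoComplex_tensorObj_d (i j : ℤ) :
    (2 : ZMod 4) • (mulTwoComplex.tensorObj mulTwoComplex).d i j = 0 :=
  HomologicalComplex.smul_tensorObj_d_eq_zero _ _ _ two_smul_mulTwoComplex_d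
    two_smul_mulTwoComplex_d i j

noncomputable def mulTwoComplexTensorMul (n : ℤ) :
    (mulTwoComplex.tensorObj mulTwoComplex).X n ⟶ ModuleCat.of (ZMod 4) (ZMod 4) :=
  HomologicalComplex.mapBifunctorDesc fun p q _ =>
    (ModuleCat.ofHom (LinearMap.mul' (ZMod 4) (ZMod 4)) :
      (mulTwoComplex.X p ⊗ mulTwoComplex.X q) ⟶ _)

lemma ιTensorObj_comp_mulTwoComplexTensorMul (p q n : ℤ) (h : p + q = n) :
    mulTwoComplex.ιTensorObj mulTwoComplex p q n h ≫ mulTwoComplexTensorMul n =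
      ModuleCat.ofHom (LinearMap.mul' (ZMod 4) (ZMod 4)) :=
  HomologicalComplex.ι_mapBifunctorDesc _ _ _ _

lemma d_comp_mulTwoComplexTensorMul (i j : ℤ) :
    (mulTwoComplex.tensorObj mulTwoComplex).d i j ≫ mulTwoComplexTensorMul j = 0 := by
  by_cases hij : i + 1 = j
  · subst hij
    have two_add_units_mul_two : ∀ u : ℤˣ, (2 : ZMod 4) + (u : ℤ) * 2 = 0 := by
      intro u
      rcases Int.units_eq_one_or u with rfl | rfl <;> decide
    refine HomologicalComplex.mapBifunctor.hom_ext fun p q h => ?_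
    rw [← Category.assoc, HomologicalComplex.ιTensorObj_d, Preadditive.add_comp,
      Category.assoc, Preadditive.zsmul_comp, Category.assoc,
      ιTensorObj_comp_mulTwoComplexTensorMul, ιTensorObj_comp_mulTwoComplexTensorMul,
      mulTwoComplex_d_eq rfl, mulTwoComplex_d_eq rfl]
    refine ModuleCat.MonoidalCategory.tensor_ext fun (x : ZMod 4) (y : ZMod 4) => ?_
    simp only [ModuleCat.hom_add, ModuleCat.hom_zsmul, LinearMap.add_apply,
      LinearMap.smul_apply, zsmul_eq_mul]
    change 2 * x * y + ((p.negOnePow : ℤ) : ZMod 4) * (x * (2 * y)) = 0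
    linear_combination x * y * two_add_units_mul_two p.negOnePow
  · rw [(mulTwoComplex.tensorObj mulTwoComplex).shape i j hij, Limits.zero_comp]

/-- the complex `X = (⋯ →2 ℤ/4 →2 ℤ/4 →2 ⋯)` over `A = ℤ/4` is acyclic,
but the total tensor product complex `X ⊗_A X` is not acyclic. -/
theorem mulTwoComplex_acyclic_tensor_not_acyclic :
    (∀ i : ℤ, mulTwoComplex.ExactAt i) ∧
      ¬ (∀ i : ℤ, (HomologicalComplex.tensorObj mulTwoComplex mulTwoComplex).ExactAt i) := by
  refine ⟨mulTwoComplex_exactAt, fun hexact =>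
    HomologicalComplex.not_exactAt_of_d_comp_eq_zero _ 0 (mulTwoComplexTensorMul 0)
      (d_comp_mulTwoComplexTensorMul _ _)
      ((2 : ZMod 4) • mulTwoComplex.ιTensorObj mulTwoComplex 0 0 0 rfl
        ((1 : ZMod 4) ⊗ₜ (1 : ZMod 4))) ?_ ?_ (hexact 0)⟩
  · rw [map_smul, ← LinearMap.smul_apply, ← ModuleCat.hom_smul,
      two_smul_mulTwoComplex_tensorObj_d]
    rfl
  · rw [map_smul, ← ConcreteCategory.comp_apply, ιTensorObj_comp_mulTwoComplexTensorMul]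
    decide
end

section
/- Let R = k[t]/(t^2) and A = k[x,y,z]/(x^2−y^2, x^2−z^2, xy, xz, yz) over a field k, with the injection R → A sending t to x^2. Then A is not a free R-module; indeed dim_k R = 2 does not divide dim_k A = 5, so A cannot be free, and since R is local, A is not projective over R. -/
open Polynomial MvPolynomial

/-- `R = k[t]/(t²)`. -/
noncomputable abbrev ringR (k : Type) [Field k] : Type :=
  AdjoinRoot ((Polynomial.X : k[X]) ^ 2)

/-- The ideal `(x² - y², x² - z², xy, xz, yz)` of `k[x, y, z]`. -/
noncomputable def relIdeal (k : Type) [Field k] : Ideal (MvPolynomial (Fin 3) k) :=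
  Ideal.span {X 0 ^ 2 - X 1 ^ 2, X 0 ^ 2 - X 2 ^ 2, X 0 * X 1, X 0 * X 2, X 1 * X 2}

/-- `A = k[x,y,z]/(x² - y², x² - z², xy, xz, yz)`. -/
noncomputable abbrev ringA (k : Type) [Field k] : Type :=
  MvPolynomial (Fin 3) k ⧸ relIdeal k

lemma x_pow_four (k : Type) [Field k] :
    (Ideal.Quotient.mk (relIdeal k) (X 0)) ^ 4 = 0 := by
  rw [← map_pow, Ideal.Quotient.eq_zero_iff_mem]
  have h1 : (X 0 ^ 2 - X 1 ^ 2 : MvPolynomial (Fin 3) k) ∈ relIdeal k :=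
    Ideal.subset_span (by simp [Set.mem_insert_iff])
  have h2 : (X 0 * X 1 : MvPolynomial (Fin 3) k) ∈ relIdeal k :=
    Ideal.subset_span (by simp [Set.mem_insert_iff])
  have key : (X 0 : MvPolynomial (Fin 3) k) ^ 4 =
      X 0 ^ 2 * (X 0 ^ 2 - X 1 ^ 2) + (X 0 * X 1) * (X 0 * X 1) := by ring
  rw [key]
  exact Ideal.add_mem _ (Ideal.mul_mem_left _ _ h1) (Ideal.mul_mem_left _ _ h2)

/-- The injection `R → A` sending `t` to `x²`. -/
noncomputable def phi (k : Type) [Field k] : ringR k →ₐ[k] ringA k :=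
  AdjoinRoot.liftAlgHom _ (Algebra.ofId k (ringA k)) ((Ideal.Quotient.mk (relIdeal k) (X 0)) ^ 2) (by
    change Polynomial.aeval _ _ = 0
    rw [map_pow, Polynomial.aeval_X]
    rw [show ((Ideal.Quotient.mk (relIdeal k) (X 0)) ^ 2) ^ 2 =
      (Ideal.Quotient.mk (relIdeal k) (X 0)) ^ 4 from by ring]
    exact x_pow_four k)

set_option synthInstance.maxHeartbeats 1000000 in
/-- `A` as an `R`-module via `t ↦ x²`. -/
noncomputable instance moduleRA (k : Type) [Field k] : Module (ringR k) (ringA k) :=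
  Module.compHom _ (phi k).toRingHom


/-!
The classes of `1, x, y, z, x²` span `A`: products of two variables reduce to `0` or `x²`, and
`x² · x = x² · y = x² · z = 0`. They are linearly independent: the coefficients of `1, x, y, z`
and the sum of the coefficients of `x², y², z²` vanish on each generator of the ideal, and as the
generators are quadrics, the part of degree `≤ 2` of `q · g` is `q(0) · g`, so these functionals
vanish on the whole ideal. Hence `dim_k A = 5`, which is not a multiple of `dim_k R = 2`, so `A`
is not free over `R`; as `R` is local, the finite `R`-module `A` is not projective either.
-/

instance AdjoinRoot.isLocalRing_X_sq {K : Type*} [Field K] :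
    IsLocalRing (AdjoinRoot (Polynomial.X ^ 2 : K[X])) := by
  let f : DualNumber K →ₐ[K] AdjoinRoot (Polynomial.X ^ 2 : K[X]) :=
    DualNumber.lift ⟨(Algebra.ofId _ _, AdjoinRoot.root _), by
      rw [← pow_two, ← AdjoinRoot.mk_X, ← map_pow, AdjoinRoot.mk_self], fun _ => Commute.all _ _⟩
  have hf : f.range = ⊤ := by
    rw [eq_top_iff, ← AdjoinRoot.adjoinRoot_eq_top, Algebra.adjoin_le_iff,
      Set.singleton_subset_iff]
    exact ⟨DualNumber.eps, DualNumber.lift_apply_eps _⟩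
  have : Nontrivial (AdjoinRoot (Polynomial.X ^ 2 : K[X])) := AdjoinRoot.nontrivial _ (by simp)
  exact IsLocalRing.of_surjective' f.toRingHom ((AlgHom.range_eq_top f).1 hf)

theorem MvPolynomial.IsHomogeneous.coeff_mul_of_degree_le {σ R : Type*} [CommSemiring R]
    {g : MvPolynomial σ R} {n : ℕ} (hg : g.IsHomogeneous n) (q : MvPolynomial σ R)
    {d : σ →₀ ℕ} (hd : d.degree ≤ n) : coeff d (q * g) = coeff 0 q * coeff d g := by
  classical
  rw [coeff_mul, Finset.sum_eq_single (0, d) _ (by simp)]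
  rintro ⟨a, b⟩ hab hne
  simp only [Finset.HasAntidiagonal.mem_antidiagonal] at hab
  have ha : a.degree ≠ 0 := by
    rw [Ne, Finsupp.degree_eq_zero_iff]
    rintro rfl
    simp_all
  have hb : b.degree ≠ n := by
    have := congrArg Finsupp.degree hab
    rw [map_add] at this
    omega
  rw [hg.coeff_eq_zero hb, mul_zero]

namespace RingA

variable (k : Type) [Field k]

local notation "x" i:max => Ideal.Quotient.mk (relIdeal k) (X i)

lemma x_mul_x (i j : Fin 3) : x i * x j = if i = j then x 0 ^ 2 else 0 := by
  have rel : ∀ g ∈ ({X 0 ^ 2 - X 1 ^ 2, X 0 ^ 2 - X 2 ^ 2, X 0 * X 1, X 0 * X 2, X 1 * X 2} :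
      Set (MvPolynomial (Fin 3) k)), Ideal.Quotient.mk (relIdeal k) g = 0 :=
    fun g hg => Ideal.Quotient.eq_zero_iff_mem.2 (Ideal.subset_span hg)
  simp only [Set.mem_insert_iff, Set.mem_singleton_iff, forall_eq_or_imp, forall_eq, map_sub,
    map_mul, map_pow] at rel
  fin_cases i <;> fin_cases j <;> simp <;> grind

lemma x_sq_mul_x (i : Fin 3) : x 0 ^ 2 * x i = 0 := by
  have hsq : x 0 ^ 2 = x (i + 1) * x (i + 1) := by simp [x_mul_x]
  rw [hsq, mul_assoc, x_mul_x, if_neg (by simp), mul_zero]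

noncomputable def basisPoly : Fin 5 → MvPolynomial (Fin 3) k := ![1, X 0, X 1, X 2, X 0 ^ 2]

noncomputable def basisVec (m : Fin 5) : ringA k :=
  Ideal.Quotient.mk (relIdeal k) (basisPoly k m)

lemma basisVec_mul_x_mem (m : Fin 5) (i : Fin 3) :
    basisVec k m * x i ∈ Submodule.span k (Set.range (basisVec k)) := by
  fin_cases m <;> fin_cases i <;> simp [basisVec, basisPoly, x_mul_x, x_sq_mul_x] <;>
    exact Submodule.subset_span (by simp [Fin.exists_fin_succ, basisVec, basisPoly])

lemma span_basisVec : Submodule.span k (Set.range (basisVec k)) = ⊤ := by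
  rw [eq_top_iff]
  rintro a -
  obtain ⟨p, rfl⟩ := Ideal.Quotient.mk_surjective a
  induction p using MvPolynomial.induction_on with
  | C c =>
    rw [← MvPolynomial.algebraMap_eq, Ideal.Quotient.mk_algebraMap, Algebra.algebraMap_eq_smul_one]
    exact Submodule.smul_mem _ c (Submodule.subset_span ⟨0, map_one _⟩)
  | add p q hp hq => rw [map_add]; exact add_mem hp hq
  | mul_X p i hp =>
    rw [map_mul]
    refine (Submodule.map_span_le (LinearMap.mulRight k (x i)) _ _).2 ?_ ⟨_, hp, rfl⟩
    rintro _ ⟨m, rfl⟩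
    exact basisVec_mul_x_mem k m i

noncomputable def coords : MvPolynomial (Fin 3) k →ₗ[k] Fin 5 → k :=
  LinearMap.pi ![lcoeff k 0, lcoeff k (.single 0 1), lcoeff k (.single 1 1), lcoeff k (.single 2 1),
    lcoeff k (.single 0 2) + lcoeff k (.single 1 2) + lcoeff k (.single 2 2)]

lemma coords_mul_of_isHomogeneous {g : MvPolynomial (Fin 3) k} (hg : g.IsHomogeneous 2)
    (q : MvPolynomial (Fin 3) k) : coords k (q * g) = coeff 0 q • coords k g := by
  have h (d : Fin 3 →₀ ℕ) (hd : d.degree ≤ 2) := hg.coeff_mul_of_degree_le q hd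
  ext m
  fin_cases m <;> simp [coords, h, mul_add]

lemma isHomogeneous_and_coords_eq_zero_of_mem_generators :
    ∀ g ∈ ({X 0 ^ 2 - X 1 ^ 2, X 0 ^ 2 - X 2 ^ 2, X 0 * X 1, X 0 * X 2, X 1 * X 2} :
      Set (MvPolynomial (Fin 3) k)), g.IsHomogeneous 2 ∧ coords k g = 0 := by
  simp only [Set.mem_insert_iff, Set.mem_singleton_iff, forall_eq_or_imp, forall_eq]
  have sq (i : Fin 3) : (X i ^ 2 : MvPolynomial (Fin 3) k).IsHomogeneous 2 :=
    isHomogeneous_X_pow i 2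
  have mul (i j : Fin 3) : (X i * X j : MvPolynomial (Fin 3) k).IsHomogeneous 2 :=
    (isHomogeneous_X k i).mul (isHomogeneous_X k j)
  refine ⟨⟨(sq 0).sub (sq 1), ?_⟩, ⟨(sq 0).sub (sq 2), ?_⟩, ⟨mul 0 1, ?_⟩, ⟨mul 0 2, ?_⟩,
    ⟨mul 1 2, ?_⟩⟩ <;> ext m <;> fin_cases m <;>
    simp [coords, MvPolynomial.coeff_X_pow, coeff_X_mul', MvPolynomial.coeff_X,
      Finsupp.single_eq_single_iff, ← Finsupp.single_tsub]

lemma coords_eq_zero_of_mem {p : MvPolynomial (Fin 3) k} (hp : p ∈ relIdeal k) :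
    coords k p = 0 := by
  suffices ∀ q, coords k (q * p) = 0 by simpa using this 1
  induction hp using Submodule.span_induction with
  | mem g hg =>
    obtain ⟨hom, hzero⟩ := isHomogeneous_and_coords_eq_zero_of_mem_generators k g hg
    intro q
    rw [coords_mul_of_isHomogeneous k hom, hzero, smul_zero]
  | zero => simp
  | add a b _ _ ha hb => intro q; rw [mul_add, map_add, ha, hb, add_zero]
  | smul r a _ ha => intro q; rw [smul_eq_mul, ← mul_assoc, ha]

lemma coords_basisPoly (m : Fin 5) : coords k (basisPoly k m) = Pi.single m 1 := by
  fin_cases m <;> ext n <;> fin_cases n <;>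
    simp [basisPoly, coords, MvPolynomial.coeff_X_pow, MvPolynomial.coeff_X, MvPolynomial.coeff_one,
      Finsupp.single_eq_single_iff, eq_comm]

lemma linearIndependent_basisVec : LinearIndependent k (basisVec k) := by
  rw [Fintype.linearIndependent_iff]
  intro c hc m
  have hmem : ∑ n, c n • basisPoly k n ∈ relIdeal k := by
    rw [← Ideal.Quotient.eq_zero_iff_mem, ← Ideal.Quotient.mkₐ_eq_mk k, map_sum, ← hc]
    simp only [map_smul, Ideal.Quotient.mkₐ_eq_mk, basisVec]
  simpa [coords_basisPoly, Pi.single_apply] using congrFun (coords_eq_zero_of_mem k hmem) m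

noncomputable def basis : Module.Basis (Fin 5) k (ringA k) :=
  .mk (linearIndependent_basisVec k) (span_basisVec k).ge

theorem finrank_eq_five : Module.finrank k (ringA k) = 5 := by
  rw [Module.finrank_eq_card_basis (basis k), Fintype.card_fin]

instance : Module.Finite k (ringA k) := .of_basis (basis k)

instance : IsScalarTower k (ringR k) (ringA k) where
  smul_assoc c r a := by
    show phi k (c • r) * a = c • (phi k r * a)
    rw [map_smul, smul_mul_assoc]

end RingA

/-- with `R = k[t]/(t²)` and
`A = k[x,y,z]/(x²-y², x²-z², xy, xz, yz)` viewed as an `R`-module via `t ↦ x²`,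
one has `dim_k R = 2`, `dim_k A = 5`, and `A` is neither free nor projective
as an `R`-module. -/
theorem ringA_not_free_not_projective (k : Type) [Field k] :
    Module.finrank k (ringR k) = 2 ∧ Module.finrank k (ringA k) = 5 ∧
      ¬ Module.Free (ringR k) (ringA k) ∧ ¬ Module.Projective (ringR k) (ringA k) := by
  have hR : Module.finrank k (ringR k) = 2 :=
    finrank_quotient_span_eq_natDegree.trans (natDegree_X_pow 2)
  have hA := RingA.finrank_eq_five k
  have not_free : ¬ Module.Free (ringR k) (ringA k) := fun _ => by
    have := Module.finrank_mul_finrank k (ringR k) (ringA k)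
    rw [hR, hA] at this
    omega
  refine ⟨hR, hA, not_free, fun _ => not_free ?_⟩
  have := Module.Finite.of_restrictScalars_finite k (ringR k) (ringA k)
  exact Module.free_of_flat_of_isLocalRing
end

section
/- Let A be a noetherian ring and M a finitely generated A-module admitting a finite resolution 0 → G_n → ··· → G_1 → G_0 → M → 0 by finitely generated Gorenstein projective modules. If additionally Ext^i_A(M, A) = 0 for all i > 0, then M itself is Gorenstein projective. -/
open CategoryTheory Opposite

/-- Vanishing of `Ext^i_A(M, N)` for left modules over a (possibly noncommutative)
ring `A`, computed in the abelian category of `A`-modules. -/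
noncomputable def extVan (A : Type) [Ring A] (M N : Type) [AddCommGroup M] [Module A M]
    [AddCommGroup N] [Module A N] (i : ℕ) : Prop :=
  Subsingleton ((((Ext ℤ (ModuleCat.{0} A) i).obj (op (ModuleCat.of A M))).obj
    (ModuleCat.of A N)) : Type)

/-- The canonical evaluation (biduality) map `M → Hom_{Aᵒᵖ}(Hom_A(M, A), A)`. -/
def evalBidual (A : Type) [Ring A] (M : Type) [AddCommGroup M] [Module A M] :
    M →ₗ[A] ((M →ₗ[A] A) →ₗ[Aᵐᵒᵖ] A) where
  toFun m :=
    { toFun := fun f => f m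
      map_add' := fun f g => rfl
      map_smul' := fun c f => rfl }
  map_add' m n := by ext f; simp
  map_smul' a m := by ext f; simp

/-- A module `M` over a ring `A` is totally reflexive (finitely generated Gorenstein
projective) if `Ext^i_A(M, A) = 0` and `Ext^i_{Aᵒᵖ}(Hom_A(M, A), A) = 0` for all `i > 0`
and the evaluation map `M → Hom_{Aᵒᵖ}(Hom_A(M, A), A)` is bijective. -/
noncomputable def IsTotallyReflexive (A : Type) [Ring A] (M : Type) [AddCommGroup M]
    [Module A M] : Prop :=
  (∀ i > 0, extVan A M A i) ∧
  (∀ i > 0, extVan Aᵐᵒᵖ (M →ₗ[A] A) A i) ∧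
  Function.Bijective (evalBidual A M)

/-!
The kernel `K` of `G₀ → M` has the shorter resolution `G₁, G₂, …`, and the long exact
`Ext`-sequence of `0 → K → G₀ → M → 0` gives `Ext^{>0}(K, A) = 0`; so by induction on the length
it suffices to show that `M` is totally reflexive when `K` and `G = G₀` are. Since
`Ext¹(M, A) = 0`, dualising gives a short exact sequence `0 → M* → G* → K* → 0`, whence
`Ext^{>0}(M*, A) = 0` by the same long exact sequence. Since `Ext¹(K*, A) = 0`, dualising once
more gives an exact row `K** → G** → M** → 0` under `K → G → M → 0`, and the five lemma makes
`M → M**` bijective.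
-/

open Limits

namespace CategoryTheory.ProjectiveResolution

variable {C : Type*} [Category C] [Abelian C] {X Y : C} (P : ProjectiveResolution X) (n : ℕ)

theorem isZero_ext_succ_iff [EnoughProjectives C] :
    IsZero (((_root_.Ext ℤ C (n + 1)).obj (op X)).obj Y) ↔
      ∀ f : P.complex.X (n + 1) ⟶ Y, P.complex.d (n + 2) (n + 1) ≫ f = 0 →
        ∃ g : P.complex.X n ⟶ Y, P.complex.d (n + 1) n ≫ g = f := by
  rw [(P.isoExt (n + 1) Y).isZero_iff, ← HomologicalComplex.exactAt_iff_isZero_homology,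
    HomologicalComplex.exactAt_iff' _ n (n + 1) (n + 2) (by simp) (by simp),
    ShortComplex.moduleCat_exact_iff]
  exact Iff.rfl

theorem subsingleton_ext_succ_iff [HasExt C] :
    Subsingleton (Abelian.Ext X Y (n + 1)) ↔
      ∀ f : P.complex.X (n + 1) ⟶ Y, P.complex.d (n + 2) (n + 1) ≫ f = 0 →
        ∃ g : P.complex.X n ⟶ Y, P.complex.d (n + 1) n ≫ g = f := by
  refine ⟨fun _ f hf => (P.extMk_eq_zero_iff f (n + 2) rfl hf n rfl).1 (Subsingleton.elim _ _),
    fun h => subsingleton_of_forall_eq 0 fun e => ?_⟩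
  obtain ⟨f, hf, rfl⟩ := P.extMk_surjective e (n + 2) rfl
  exact (P.extMk_eq_zero_iff f (n + 2) rfl hf n rfl).2 (h f hf)

end CategoryTheory.ProjectiveResolution

section ShortExact

variable {R : Type} [Ring R] {K G M N : Type} [AddCommGroup K] [Module R K]
  [AddCommGroup G] [Module R G] [AddCommGroup M] [Module R M] [AddCommGroup N] [Module R N]

/- `extVan` uses the `Ext` of left derived functors; both it and `Abelian.Ext`, which has the
long exact sequences, are cocycles modulo coboundaries on a projective resolution. -/
theorem extVan_iff_subsingleton_ext {i : ℕ} (hi : 0 < i) :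
    extVan R M N i ↔ Subsingleton (Abelian.Ext (ModuleCat.of R M) (ModuleCat.of R N) i) := by
  obtain ⟨i, rfl⟩ := Nat.exists_eq_add_of_lt hi
  let P := ProjectiveResolution.of (ModuleCat.of R M)
  rw [extVan, ← ModuleCat.isZero_iff_subsingleton, P.isZero_ext_succ_iff,
    P.subsingleton_ext_succ_iff]

theorem extVan_of_subsingleton [Subsingleton M] {i : ℕ} (hi : 0 < i) : extVan R M N i := by
  obtain ⟨i, rfl⟩ := Nat.exists_eq_add_of_lt hi
  have := (ModuleCat.isZero_of_subsingleton (ModuleCat.of R M)).projective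
  rw [extVan_iff_subsingleton_ext hi]
  exact Abelian.Ext.subsingleton_of_projective _ _ _

variable {ι : K →ₗ[R] G} {π : G →ₗ[R] M}

theorem extVan_of_exact (hι : Function.Injective ι) (hπ : Function.Surjective π)
    (h : Function.Exact ι π) {i : ℕ} (hi : 0 < i) (hG : extVan R G N i)
    (hM : extVan R M N (i + 1)) : extVan R K N i := by
  rw [extVan_iff_subsingleton_ext hi] at hG ⊢
  rw [extVan_iff_subsingleton_ext i.succ_pos] at hM
  have hS := ModuleCat.shortComplex_shortExact
    (ShortComplex.moduleCatMk ι π h.linearMap_comp_eq_zero) h hι hπ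
  refine subsingleton_of_forall_eq 0 fun x => ?_
  obtain ⟨y, rfl⟩ := Abelian.Ext.contravariant_sequence_exact₁ hS _ x (add_comm 1 i)
    (hM.elim _ _)
  rw [hG.elim y 0]
  exact Abelian.Ext.comp_zero _ _ _ _ _

theorem exists_comp_eq_of_extVan_one (hι : Function.Injective ι) (hπ : Function.Surjective π)
    (h : Function.Exact ι π) (hM : extVan R M N 1) (φ : K →ₗ[R] N) :
    ∃ Φ : G →ₗ[R] N, Φ ∘ₗ ι = φ := by
  rw [extVan_iff_subsingleton_ext one_pos] at hM
  have hS := ModuleCat.shortComplex_shortExact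
    (ShortComplex.moduleCatMk ι π h.linearMap_comp_eq_zero) h hι hπ
  obtain ⟨y, hy⟩ := Abelian.Ext.contravariant_sequence_exact₁ hS _
    (Abelian.Ext.mk₀ (ModuleCat.ofHom φ)) (n₁ := 1) rfl (hM.elim _ _)
  refine ⟨(Abelian.Ext.homEquiv₀ y).hom, ?_⟩
  rw [← Abelian.Ext.mk₀_homEquiv₀_apply y, Abelian.Ext.mk₀_comp_mk₀] at hy
  exact congrArg ModuleCat.Hom.hom ((Abelian.Ext.mk₀_bijective _ _).1 hy)

end ShortExact

theorem LinearMap.exact_lcomp_of_exact_of_surjective' {R S : Type*} [Ring R] [Semiring S]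
    {M₁ M₂ M₃ N : Type*} [AddCommGroup M₁] [Module R M₁] [AddCommGroup M₂] [Module R M₂]
    [AddCommGroup M₃] [Module R M₃] [AddCommGroup N] [Module R N] [Module S N]
    [SMulCommClass R S N] {f : M₁ →ₗ[R] M₂} {g : M₂ →ₗ[R] M₃}
    (h : Function.Exact f g) (hg : Function.Surjective g) :
    Function.Exact (LinearMap.lcomp S N g) (LinearMap.lcomp S N f) := by
  intro φ
  refine ⟨fun hφ => ?_, ?_⟩
  · refine ⟨(LinearMap.range f).liftQ φ (LinearMap.range_le_ker_iff.mpr hφ) ∘ₗ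
      (h.linearEquivOfSurjective hg).symm.toLinearMap, ?_⟩
    ext x
    simp
  · rintro ⟨ψ, rfl⟩
    ext x
    simp [h.apply_apply_eq_zero]

section TotallyReflexive

variable {R : Type} [Ring R] {K G M : Type} [AddCommGroup K] [Module R K]
  [AddCommGroup G] [Module R G] [AddCommGroup M] [Module R M]

theorem isTotallyReflexive_of_subsingleton [Subsingleton M] : IsTotallyReflexive R M := by
  refine ⟨fun _ => extVan_of_subsingleton, fun _ hi => ?_,
    Function.injective_of_subsingleton _, fun ξ => ⟨0, ?_⟩⟩
  · exact extVan_of_subsingleton (R := Rᵐᵒᵖ) (M := M →ₗ[R] R) hi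
  · ext φ
    rw [Subsingleton.elim φ 0]
    simp

theorem isTotallyReflexive_of_exact {ι : K →ₗ[R] G} {π : G →ₗ[R] M}
    (hι : Function.Injective ι) (hπ : Function.Surjective π) (h : Function.Exact ι π)
    (hK : IsTotallyReflexive R K) (hG : IsTotallyReflexive R G)
    (hM : ∀ i > 0, extVan R M R i) : IsTotallyReflexive R M := by
  obtain ⟨-, hKdual, hKeval⟩ := hK
  obtain ⟨-, hGdual, hGeval⟩ := hG
  let πd := LinearMap.lcomp Rᵐᵒᵖ R π
  let ιd := LinearMap.lcomp Rᵐᵒᵖ R ι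
  have hπd : Function.Injective πd := LinearMap.lcomp_injective_of_surjective π hπ
  have hιd : Function.Surjective ιd := exists_comp_eq_of_extVan_one hι hπ h (hM 1 one_pos)
  have hd : Function.Exact πd ιd := LinearMap.exact_lcomp_of_exact_of_surjective' h hπ
  have hMdual : ∀ i > 0, extVan Rᵐᵒᵖ (M →ₗ[R] R) R i := fun i hi =>
    extVan_of_exact hπd hιd hd hi (hGdual i hi) (hKdual (i + 1) i.succ_pos)
  refine ⟨hM, hMdual, ?_⟩
  have hdd : Function.Exact (LinearMap.lcomp R R ιd) (LinearMap.lcomp R R πd) :=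
    LinearMap.exact_lcomp_of_exact_of_surjective' hd hιd
  have hπdd : Function.Surjective (LinearMap.lcomp R R πd) :=
    exists_comp_eq_of_extVan_one hπd hιd hd (hKdual 1 one_pos)
  exact AddMonoidHom.bijective_of_surjective_of_bijective_of_right_exact
    ι.toAddMonoidHom π.toAddMonoidHom
    (LinearMap.lcomp R R ιd).toAddMonoidHom (LinearMap.lcomp R R πd).toAddMonoidHom
    (evalBidual R K).toAddMonoidHom (evalBidual R G).toAddMonoidHom
    (evalBidual R M).toAddMonoidHom rfl rfl h hdd hKeval.2 hGeval hπ hπdd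

theorem isTotallyReflexive_of_resolution {G : ℕ → Type} [∀ i, AddCommGroup (G i)]
    [∀ i, Module R (G i)] (n : ℕ) (hG : ∀ i, IsTotallyReflexive R (G i))
    (hGzero : ∀ i, n ≤ i → Subsingleton (G i)) (d : ∀ i, G (i + 1) →ₗ[R] G i)
    (ε : G 0 →ₗ[R] M) (hε : Function.Surjective ε) (hex0 : Function.Exact (d 0) ε)
    (hex : ∀ i, Function.Exact (d (i + 1)) (d i)) (hExt : ∀ i > 0, extVan R M R i) :
    IsTotallyReflexive R M := by
  induction n generalizing M G with
  | zero =>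
    have := hGzero 0 le_rfl
    have := hε.subsingleton
    exact isTotallyReflexive_of_subsingleton
  | succ n ih =>
    have hι := (LinearMap.ker ε).injective_subtype
    have hexK := LinearMap.exact_subtype_ker_map ε
    let ε' : G 1 →ₗ[R] LinearMap.ker ε := (d 0).codRestrict _ hex0.apply_apply_eq_zero
    have hε' : Function.Surjective ε' := fun ⟨y, hy⟩ =>
      let ⟨x, hx⟩ := (hex0 y).1 hy; ⟨x, Subtype.ext hx⟩
    have hex0' : Function.Exact (d 1) ε' := hι.comp_exact_iff_exact.1 (hex 0)
    refine isTotallyReflexive_of_exact hι hε hexK ?_ (hG 0) hExt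
    exact ih (fun i => hG (i + 1)) (fun i hi => hGzero (i + 1) (by omega)) (fun i => d (i + 1))
      ε' hε' hex0' (fun i => hex (i + 1))
      (fun i hi => extVan_of_exact hι hε hexK hi ((hG 0).1 i hi) (hExt (i + 1) i.succ_pos))

end TotallyReflexive

theorem totallyReflexive_of_finite_gorenstein_resolution_general
    (A : Type) [Ring A]
    (M : Type) [AddCommGroup M] [Module A M]
    (n : ℕ) (G : ℕ → Type) [∀ i, AddCommGroup (G i)] [∀ i, Module A (G i)]
    (hG : ∀ i, IsTotallyReflexive A (G i))
    (hGzero : ∀ i, n < i → Subsingleton (G i))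
    (d : ∀ i, G (i + 1) →ₗ[A] G i) (ε : G 0 →ₗ[A] M)
    (hε : Function.Surjective ε)
    (hex0 : Function.Exact (d 0) ε)
    (hex : ∀ i, Function.Exact (d (i + 1)) (d i))
    (hExt : ∀ i > 0, extVan A M A i) :
    IsTotallyReflexive A M :=
  isTotallyReflexive_of_resolution (n + 1) hG hGzero d ε hε hex0 hex hExt

/-- over a two-sided noetherian ring `A`, if a finitely generated module `M`
admits a finite resolution `0 → G_n → ⋯ → G_1 → G_0 → M → 0` by finitely generated
totally reflexive (Gorenstein projective) modules, and `Ext^i_A(M, A) = 0` for all `i > 0`,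
then `M` is itself totally reflexive (Gorenstein projective). -/
theorem totallyReflexive_of_finite_gorenstein_resolution
    (A : Type) [Ring A] [IsNoetherianRing A] [IsNoetherianRing Aᵐᵒᵖ]
    (M : Type) [AddCommGroup M] [Module A M] [Module.Finite A M]
    (n : ℕ) (G : ℕ → Type) [∀ i, AddCommGroup (G i)] [∀ i, Module A (G i)]
    [∀ i, Module.Finite A (G i)]
    (hG : ∀ i, IsTotallyReflexive A (G i))
    (hGzero : ∀ i, n < i → Subsingleton (G i))
    (d : ∀ i, G (i + 1) →ₗ[A] G i) (ε : G 0 →ₗ[A] M)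
    (hε : Function.Surjective ε)
    (hex0 : Function.Exact (d 0) ε)
    (hex : ∀ i, Function.Exact (d (i + 1)) (d i))
    (hExt : ∀ i > 0, extVan A M A i) :
    IsTotallyReflexive A M :=
  totallyReflexive_of_finite_gorenstein_resolution_general A M n G hG hGzero d ε hε hex0 hex hExt
end
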